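/- arXiv:2106.07752 — 2 statements merged into one kernel-verified Lean document; each statement's English description precedes it below -/
import Mathlib

section
/- Let n ≥ 1, let u ∈ ℝ^{n×n} with u_{ij} ≥ 0, and let y ∈ ℝ^n with y_j ≥ 0 and Σ_j y_j ≤ 1. Define OPT_{+y}(u) as the supremum of Σ_{i,j} u_{ij}·x_{ij} over all matrices x ∈ ℝ^{n×n} with x_{ij} ≥ 0, each row sum at most 1, and for each item j the column sum at most 1 + y_j. Then OPT_{+y}(u) = OPT(u) + Σ_j y_j·C_j(u) (fractional augmentation: the value of making a y_j-fraction of an extra copy of each item j available increases the optimal welfare by exactly Σ_j y_j·C_j). -/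
open Finset

/-- The optimal welfare of the assignment problem. -/
noncomputable def OPT (n : ℕ) (u : Fin n → Fin n → ℝ) : ℝ :=
  sSup {v | ∃ π : Equiv.Perm (Fin n), v = ∑ i, u i (π i)}

/-- The optimal welfare when a second copy of item `j` is available. -/
noncomputable def OPTplus (n : ℕ) (u : Fin n → Fin n → ℝ) (j : Fin n) : ℝ :=
  sSup {v | ∃ π : Fin n → Fin n,
    (∀ ℓ : Fin n, ℓ ≠ j → (Finset.univ.filter (fun i => π i = ℓ)).card ≤ 1) ∧
    (Finset.univ.filter (fun i => π i = j)).card ≤ 2 ∧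
    v = ∑ i, u i (π i)}

/-- The VCG price of item `j`. -/
noncomputable def price (n : ℕ) (u : Fin n → Fin n → ℝ) (j : Fin n) : ℝ :=
  OPTplus n u j - OPT n u

/-- The optimal fractional welfare when an additional `y j` fraction of each
item `j` is available: the supremum of `∑ i, ∑ j, u i j * x i j` over all
nonnegative matrices with row sums at most `1` and column sums at most `1 + y j`. -/
noncomputable def OPTplusFrac (n : ℕ) (u : Fin n → Fin n → ℝ) (y : Fin n → ℝ) : ℝ :=
  sSup {v | ∃ x : Fin n → Fin n → ℝ,
    (∀ i j, 0 ≤ x i j) ∧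
    (∀ i, ∑ j, x i j ≤ 1) ∧
    (∀ j, ∑ i, x i j ≤ 1 + y j) ∧
    v = ∑ i, ∑ j, u i j * x i j}

/-!
For `≥`, mix an optimal assignment (weight `1 - ∑ j, y j`) with, for each item `j`, an optimal
assignment that uses two copies of `j` (weight `y j`). For `≤`, use LP weak duality with a dual
solution `(p, q)` of the assignment problem whose item prices satisfy `q j ≤ price n u j`.
Fix an optimal permutation `π₀` and let the edge `a → b` of the exchange graph carry the gain
of the owner of `a` switching to `b`; take `q j` to be the largest weight of a simple path
ending at `j`. Optimality of `π₀` forbids cycles of positive weight, which makes `(p, q)` dual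
feasible, and augmenting `π₀` along a heaviest path to `j` yields an assignment that uses a
second copy of `j`, so `q j ≤ price n u j`.
-/

def pathWeight {α : Type*} (w : α → α → ℝ) : List α → ℝ
  | a :: b :: t => w a b + pathWeight w (b :: t)
  | _ => 0

section PathWeight

variable {α : Type*} (w : α → α → ℝ)

@[simp] lemma pathWeight_singleton (a : α) : pathWeight w [a] = 0 := rfl
@[simp] lemma pathWeight_cons_cons (a b : α) (t : List α) :
    pathWeight w (a :: b :: t) = w a b + pathWeight w (b :: t) := rfl

lemma pathWeight_append_cons (x : α) (ys : List α) :
    ∀ xs : List α, pathWeight w (xs ++ x :: ys) = pathWeight w (xs ++ [x]) + pathWeight w (x :: ys)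
  | [] => by simp
  | [a] => by simp
  | a :: b :: t => by
    have ih := pathWeight_append_cons x ys (b :: t)
    simp only [List.cons_append, pathWeight_cons_cons] at ih ⊢
    rw [ih, add_assoc]

lemma pathWeight_concat {l : List α} {a : α} (hl : l.getLast? = some a) (b : α) :
    pathWeight w (l ++ [b]) = pathWeight w l + w a b := by
  obtain ⟨s, rfl⟩ := List.getLast?_eq_some_iff.mp hl
  rw [List.append_assoc, List.singleton_append, pathWeight_append_cons]
  simp

end PathWeight

lemma Fintype.sum_apply_update {ι κ : Type*} [Fintype ι] [DecidableEq ι] (w : ι → κ → ℝ)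
    (f : ι → κ) (a : ι) (b : κ) :
    ∑ i, w i (Function.update f a b i) = ∑ i, w i (f i) + (w a b - w a (f a)) := by
  simp_rw [Function.apply_update (fun i => w i), Finset.sum_update_of_mem (Finset.mem_univ a),
    ← Finset.sum_erase_add _ _ (Finset.mem_univ a), Finset.sdiff_singleton_eq_erase]
  ring

lemma List.formPerm_getLast?_eq_head? {α : Type*} [DecidableEq α] {l : List α} {a b : α}
    (ha : l.head? = some a) (hb : l.getLast? = some b) : l.formPerm b = a := by
  cases l with
  | nil => simp at ha
  | cons x xs =>
    simp only [List.head?_cons, Option.some.injEq] at ha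
    rw [List.getLast?_eq_some_getLast (List.cons_ne_nil x xs), Option.some.injEq] at hb
    subst ha hb
    exact List.formPerm_apply_getLast _ _

lemma sum_formPerm_eq_pathWeight_add {α : Type*} [Fintype α] [DecidableEq α] (w : α → α → ℝ)
    (hw : ∀ a, w a a = 0) :
    ∀ {l : List α} {a b : α}, l.Nodup → l.head? = some a → l.getLast? = some b →
      ∑ x, w x (l.formPerm x) = pathWeight w l + w b a
  | [], _, _, _, ha, _ => by simp at ha
  | [x], a, b, _, ha, hb => by
    simp only [List.head?_cons, List.getLast?_singleton, Option.some.injEq] at ha hb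
    subst ha hb
    simp [hw]
  | x :: y :: t, a, b, hnd, ha, hb => by
    simp only [List.head?_cons, Option.some.injEq] at ha
    subst ha
    rw [List.getLast?_cons_cons] at hb
    set g := (y :: t).formPerm
    have hx : x ∉ y :: t := (List.nodup_cons.mp hnd).1
    have hbx : b ≠ x := by
      rintro rfl; exact hx (List.mem_of_getLast? hb)
    have hgx : g x = x := List.formPerm_apply_of_notMem hx
    have hgb : g b = y := List.formPerm_getLast?_eq_head? rfl hb
    have hswap : ⇑(x :: y :: t).formPerm = Function.update (Function.update g x y) b x := by
      funext z
      change Equiv.swap x y (g z) = _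
      by_cases hzb : z = b
      · subst hzb; simp [hgb]
      by_cases hzx : z = x
      · subst hzx; simp [hgx, hzb]
      have hgzy : g z ≠ y := fun h => hzb (g.injective (h.trans hgb.symm))
      have hgzx : g z ≠ x := fun h => hzx (g.injective (h.trans hgx.symm))
      simp [hzb, hzx, Equiv.swap_apply_of_ne_of_ne hgzx hgzy]
    rw [hswap, Fintype.sum_apply_update, Fintype.sum_apply_update,
      sum_formPerm_eq_pathWeight_add w hw (List.nodup_cons.mp hnd).2 rfl hb]
    simp only [Function.update_of_ne hbx, hgb, hgx, hw, pathWeight_cons_cons]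
    ring

section Assignment

variable {n : ℕ} (u : Fin n → Fin n → ℝ)

lemma OPT_eq_iSup : OPT n u = ⨆ π : Equiv.Perm (Fin n), ∑ i, u i (π i) := by
  simp only [OPT, iSup, Set.range, eq_comm]

lemma sum_le_OPT (π : Equiv.Perm (Fin n)) : ∑ i, u i (π i) ≤ OPT n u :=
  OPT_eq_iSup u ▸
    le_ciSup (Set.finite_range fun π : Equiv.Perm (Fin n) => ∑ i, u i (π i)).bddAbove π

lemma exists_perm_sum_eq_OPT : ∃ π : Equiv.Perm (Fin n), ∑ i, u i (π i) = OPT n u :=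
  OPT_eq_iSup u ▸ exists_eq_ciSup_of_finite

variable {u} in
lemma finite_plusValues (j : Fin n) :
    {v | ∃ π : Fin n → Fin n,
      (∀ ℓ : Fin n, ℓ ≠ j → #{i | π i = ℓ} ≤ 1) ∧ #{i | π i = j} ≤ 2 ∧
      v = ∑ i, u i (π i)}.Finite :=
  (Set.finite_range fun π : Fin n → Fin n => ∑ i, u i (π i)).subset
    fun _ ⟨π, _, _, hv⟩ => ⟨π, hv.symm⟩

lemma exists_sum_eq_OPTplus (j : Fin n) : ∃ π : Fin n → Fin n,
    (∀ ℓ : Fin n, ℓ ≠ j → #{i | π i = ℓ} ≤ 1) ∧ #{i | π i = j} ≤ 2 ∧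
      ∑ i, u i (π i) = OPTplus n u j := by
  obtain ⟨π, h₁, h₂, hπ⟩ : OPTplus n u j ∈ {v | ∃ π : Fin n → Fin n,
      (∀ ℓ : Fin n, ℓ ≠ j → #{i | π i = ℓ} ≤ 1) ∧ #{i | π i = j} ≤ 2 ∧
      v = ∑ i, u i (π i)} :=
    Set.Nonempty.csSup_mem ⟨_, id, fun ℓ _ => by simp [filter_eq'], by simp [filter_eq'], rfl⟩
      (finite_plusValues j)
  exact ⟨π, h₁, h₂, hπ.symm⟩

lemma sum_update_le_OPTplus (τ : Equiv.Perm (Fin n)) (i₀ j : Fin n) :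
    ∑ i, u i (Function.update τ i₀ j i) ≤ OPTplus n u j := by
  refine le_csSup (finite_plusValues j).bddAbove ⟨_, fun ℓ hℓ => ?_, ?_, rfl⟩
  · refine card_le_one.mpr fun a ha b hb => ?_
    simp only [mem_filter, mem_univ, true_and] at ha hb
    have key : ∀ i, Function.update τ i₀ j i = ℓ → τ i = ℓ := fun i hi => by
      rcases eq_or_ne i i₀ with rfl | hi₀
      · simp [hℓ.symm] at hi
      · simpa [hi₀] using hi
    exact τ.injective ((key a ha).trans (key b hb).symm)
  · calc #{i | Function.update τ i₀ j i = j} ≤ #{i₀, τ.symm j} := by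
          refine card_le_card fun i hi => ?_
          simp only [mem_filter, mem_univ, true_and] at hi
          rcases eq_or_ne i i₀ with rfl | hi₀
          · simp
          · rw [Function.update_of_ne hi₀] at hi
            simp [← hi]
      _ ≤ 2 := card_le_two

end Assignment

section ExchangeGraph

variable {n : ℕ} (u : Fin n → Fin n → ℝ) (π₀ : Equiv.Perm (Fin n))

def exchangeGain (a b : Fin n) : ℝ := u (π₀.symm a) b - u (π₀.symm a) a

lemma exchangeGain_self (a : Fin n) : exchangeGain u π₀ a a = 0 := sub_self _

lemma sum_comp_eq_add_sum_exchangeGain (f : Fin n → Fin n) :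
    ∑ i, u i (f (π₀ i)) = ∑ i, u i (π₀ i) + ∑ a, exchangeGain u π₀ a (f a) := by
  rw [← Equiv.sum_comp π₀ fun a => exchangeGain u π₀ a (f a)]
  simp [exchangeGain, sum_sub_distrib]

variable {u π₀}

lemma sum_formPerm_comp_eq (hπ₀ : ∑ i, u i (π₀ i) = OPT n u) {l : List (Fin n)} {a b : Fin n}
    (hl : l.Nodup) (ha : l.head? = some a) (hb : l.getLast? = some b) :
    ∑ i, u i (l.formPerm (π₀ i)) =
      OPT n u + pathWeight (exchangeGain u π₀) l + exchangeGain u π₀ b a := by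
  rw [sum_comp_eq_add_sum_exchangeGain, hπ₀,
    sum_formPerm_eq_pathWeight_add _ (exchangeGain_self u π₀) hl ha hb, add_assoc]

lemma pathWeight_add_exchangeGain_nonpos (hπ₀ : ∑ i, u i (π₀ i) = OPT n u) {l : List (Fin n)}
    {a b : Fin n} (hl : l.Nodup) (ha : l.head? = some a) (hb : l.getLast? = some b) :
    pathWeight (exchangeGain u π₀) l + exchangeGain u π₀ b a ≤ 0 := by
  have h := sum_le_OPT u (π₀.trans l.formPerm)
  simp only [Equiv.trans_apply, sum_formPerm_comp_eq hπ₀ hl ha hb] at h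
  linarith

variable (u π₀)

noncomputable def maxPathWeight (j : Fin n) : ℝ :=
  sSup {v | ∃ l : List (Fin n), l.Nodup ∧ l.getLast? = some j ∧
    v = pathWeight (exchangeGain u π₀) l}

lemma finite_pathWeights (j : Fin n) :
    {v | ∃ l : List (Fin n), l.Nodup ∧ l.getLast? = some j ∧
      v = pathWeight (exchangeGain u π₀) l}.Finite :=
  ((List.finite_length_le (Fin n) n).image _).subset fun _ ⟨l, hl, _, hv⟩ =>
    ⟨l, by simpa using hl.length_le_card, hv.symm⟩

lemma exists_pathWeight_eq_maxPathWeight (j : Fin n) : ∃ l : List (Fin n),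
    l.Nodup ∧ l.getLast? = some j ∧ pathWeight (exchangeGain u π₀) l = maxPathWeight u π₀ j := by
  obtain ⟨l, hl, hj, hv⟩ : maxPathWeight u π₀ j ∈ _ :=
    Set.Nonempty.csSup_mem ⟨0, [j], List.nodup_singleton j, rfl, rfl⟩ (finite_pathWeights u π₀ j)
  exact ⟨l, hl, hj, hv.symm⟩

variable {u π₀}

lemma pathWeight_le_maxPathWeight {l : List (Fin n)} {j : Fin n} (hl : l.Nodup)
    (hj : l.getLast? = some j) : pathWeight (exchangeGain u π₀) l ≤ maxPathWeight u π₀ j :=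
  le_csSup (finite_pathWeights u π₀ j).bddAbove ⟨l, hl, hj, rfl⟩

lemma maxPathWeight_nonneg (j : Fin n) : 0 ≤ maxPathWeight u π₀ j :=
  pathWeight_le_maxPathWeight (l := [j]) (List.nodup_singleton j) rfl

lemma maxPathWeight_add_exchangeGain_le (hπ₀ : ∑ i, u i (π₀ i) = OPT n u) (j ℓ : Fin n) :
    maxPathWeight u π₀ j + exchangeGain u π₀ j ℓ ≤ maxPathWeight u π₀ ℓ := by
  obtain ⟨l, hl, hj, hlj⟩ := exists_pathWeight_eq_maxPathWeight u π₀ j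
  rw [← hlj]
  by_cases hℓ : ℓ ∈ l
  · -- the path runs through `ℓ`: cut it there and close the remainder into a cycle
    obtain ⟨s, t, rfl⟩ := List.append_of_mem hℓ
    have hprefix := pathWeight_le_maxPathWeight (u := u) (π₀ := π₀)
      (((List.nil_sublist t).cons_cons ℓ |>.append_left s).nodup hl) List.getLast?_concat
    have hcycle := pathWeight_add_exchangeGain_nonpos hπ₀ (List.nodup_append.mp hl).2.1 rfl
      (by rwa [List.getLast?_append_of_ne_nil _ (List.cons_ne_nil ℓ t)] at hj)
    rw [pathWeight_append_cons]
    linarith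
  · rw [← pathWeight_concat _ hj]
    exact pathWeight_le_maxPathWeight (hl.append (List.nodup_singleton ℓ) (by simpa using hℓ))
      List.getLast?_concat

lemma maxPathWeight_le (hπ₀ : ∑ i, u i (π₀ i) = OPT n u) (hu : ∀ i j, 0 ≤ u i j) (j : Fin n) :
    maxPathWeight u π₀ j ≤ u (π₀.symm j) j := by
  obtain ⟨l, hl, hj, hlj⟩ := exists_pathWeight_eq_maxPathWeight u π₀ j
  obtain ⟨a, ha⟩ : ∃ a, l.head? = some a := by cases l <;> simp_all
  have := pathWeight_add_exchangeGain_nonpos hπ₀ hl ha hj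
  have := hu (π₀.symm j) a
  rw [exchangeGain] at *
  linarith

lemma maxPathWeight_le_price (hπ₀ : ∑ i, u i (π₀ i) = OPT n u) (j : Fin n) :
    maxPathWeight u π₀ j ≤ price n u j := by
  obtain ⟨l, hl, hj, hlj⟩ := exists_pathWeight_eq_maxPathWeight u π₀ j
  obtain ⟨a, ha⟩ : ∃ a, l.head? = some a := by cases l <;> simp_all
  have h := sum_update_le_OPTplus u (π₀.trans l.formPerm) (π₀.symm j) j
  simp only [Fintype.sum_apply_update, Equiv.trans_apply, Equiv.apply_symm_apply,
    List.formPerm_getLast?_eq_head? ha hj, sum_formPerm_comp_eq hπ₀ hl ha hj] at h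
  rw [price, ← hlj, exchangeGain] at *
  linarith

variable (u) in
lemma exists_dual_le_price (hu : ∀ i j, 0 ≤ u i j) :
    ∃ p q : Fin n → ℝ, (∀ i, 0 ≤ p i) ∧ (∀ j, 0 ≤ q j) ∧ (∀ i j, u i j ≤ p i + q j) ∧
      ∑ i, p i + ∑ j, q j = OPT n u ∧ ∀ j, q j ≤ price n u j := by
  obtain ⟨π₀, hπ₀⟩ := exists_perm_sum_eq_OPT u
  refine ⟨fun i => u i (π₀ i) - maxPathWeight u π₀ (π₀ i), maxPathWeight u π₀,
    fun i => ?_, maxPathWeight_nonneg, fun i ℓ => ?_, ?_, maxPathWeight_le_price hπ₀⟩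
  · simpa using maxPathWeight_le hπ₀ hu (π₀ i)
  · have := maxPathWeight_add_exchangeGain_le hπ₀ (π₀ i) ℓ
    simp only [exchangeGain, Equiv.symm_apply_apply] at this
    linarith
  · rw [sum_sub_distrib, Equiv.sum_comp π₀ (maxPathWeight u π₀), hπ₀, sub_add_cancel]

end ExchangeGraph

lemma sum_mul_le_of_dual {ι κ : Type*} [Fintype ι] [Fintype κ] {u x : ι → κ → ℝ}
    {p r : ι → ℝ} {q s : κ → ℝ}
    (hp : ∀ i, 0 ≤ p i) (hq : ∀ j, 0 ≤ q j) (hpq : ∀ i j, u i j ≤ p i + q j)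
    (hx : ∀ i j, 0 ≤ x i j) (hrow : ∀ i, ∑ j, x i j ≤ r i) (hcol : ∀ j, ∑ i, x i j ≤ s j) :
    ∑ i, ∑ j, u i j * x i j ≤ ∑ i, p i * r i + ∑ j, q j * s j :=
  calc ∑ i, ∑ j, u i j * x i j ≤ ∑ i, ∑ j, (p i + q j) * x i j :=
        sum_le_sum fun i _ => sum_le_sum fun j _ => mul_le_mul_of_nonneg_right (hpq i j) (hx i j)
    _ = ∑ i, p i * ∑ j, x i j + ∑ j, q j * ∑ i, x i j := by
        simp only [add_mul, sum_add_distrib, mul_sum]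
        rw [sum_comm (f := fun i j => q j * x i j)]
    _ ≤ ∑ i, p i * r i + ∑ j, q j * s j :=
        add_le_add (sum_le_sum fun i _ => mul_le_mul_of_nonneg_left (hrow i) (hp i))
          (sum_le_sum fun j _ => mul_le_mul_of_nonneg_left (hcol j) (hq j))

section MixAssignment

variable {ι κ K : Type*} [DecidableEq κ] [Fintype K] (c : K → ℝ) (τ : K → ι → κ)

def mixAssignment (i : ι) (j : κ) : ℝ :=
  ∑ k, c k * if τ k i = j then 1 else 0

lemma mixAssignment_nonneg (hc : ∀ k, 0 ≤ c k) (i : ι) (j : κ) : 0 ≤ mixAssignment c τ i j :=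
  sum_nonneg fun k _ => mul_nonneg (hc k) (by positivity)

lemma sum_mixAssignment_row [Fintype κ] (i : ι) : ∑ j, mixAssignment c τ i j = ∑ k, c k := by
  simp only [mixAssignment]
  rw [sum_comm]
  simp

lemma sum_mixAssignment_col [Fintype ι] (j : κ) :
    ∑ i, mixAssignment c τ i j = ∑ k, c k * #{i | τ k i = j} := by
  simp only [mixAssignment]
  rw [sum_comm]
  exact sum_congr rfl fun k _ => by rw [← mul_sum, sum_boole]

lemma sum_mul_mixAssignment [Fintype ι] [Fintype κ] (u : ι → κ → ℝ) :
    ∑ i, ∑ j, u i j * mixAssignment c τ i j = ∑ k, c k * ∑ i, u i (τ k i) := by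
  have hrow (i : ι) : ∑ j, u i j * mixAssignment c τ i j = ∑ k, c k * u i (τ k i) := by
    simp only [mixAssignment, mul_sum]
    rw [sum_comm]
    simp [mul_comm]
  simp only [hrow, mul_sum]
  exact sum_comm

end MixAssignment

lemma card_filter_perm_apply_eq {n : ℕ} (π : Equiv.Perm (Fin n)) (j : Fin n) :
    #{i | π i = j} = 1 := by
  simp [← Equiv.eq_symm_apply, filter_eq']

lemma exists_frac_assignment_eq {n : ℕ} (u : Fin n → Fin n → ℝ) {y : Fin n → ℝ}
    (hy : ∀ j, 0 ≤ y j) (hysum : ∑ j, y j ≤ 1) :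
    ∃ x : Fin n → Fin n → ℝ, (∀ i j, 0 ≤ x i j) ∧ (∀ i, ∑ j, x i j ≤ 1) ∧
      (∀ j, ∑ i, x i j ≤ 1 + y j) ∧
      ∑ i, ∑ j, u i j * x i j = OPT n u + ∑ j, y j * price n u j := by
  obtain ⟨π₀, hπ₀⟩ := exists_perm_sum_eq_OPT u
  choose σ hσ₁ hσ₂ hσ using exists_sum_eq_OPTplus u
  let c : Option (Fin n) → ℝ := fun k => k.elim (1 - ∑ j, y j) y
  let τ : Option (Fin n) → Fin n → Fin n := fun k => k.elim π₀ σ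
  refine ⟨mixAssignment c τ, mixAssignment_nonneg c τ ?_, fun i => ?_, fun ℓ => ?_, ?_⟩
  · rintro (_ | j)
    exacts [sub_nonneg.mpr hysum, hy j]
  · simp [sum_mixAssignment_row, Fintype.sum_option, c]
  · have hσℓ (j : Fin n) : y j * #{i | σ j i = ℓ} ≤ y j + if j = ℓ then y j else 0 := by
      rcases eq_or_ne j ℓ with rfl | hjℓ
      · have : (#{i | σ j i = j} : ℝ) ≤ 2 := by exact_mod_cast hσ₂ j
        simp only [if_true]
        linarith [mul_le_mul_of_nonneg_left this (hy j)]
      · have : (#{i | σ j i = ℓ} : ℝ) ≤ 1 := by exact_mod_cast hσ₁ j ℓ hjℓ.symm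
        simp only [hjℓ, if_false, add_zero]
        linarith [mul_le_mul_of_nonneg_left this (hy j)]
    calc ∑ i, mixAssignment c τ i ℓ = 1 - ∑ j, y j + ∑ j, y j * #{i | σ j i = ℓ} := by
          simp only [sum_mixAssignment_col, Fintype.sum_option, c, τ, Option.elim,
            card_filter_perm_apply_eq, Nat.cast_one, mul_one]
      _ ≤ 1 - ∑ j, y j + ∑ j, (y j + if j = ℓ then y j else 0) := by gcongr with j; exact hσℓ j
      _ = 1 + y ℓ := by
          rw [sum_add_distrib, sum_ite_eq', if_pos (mem_univ ℓ)]
          ring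
  · simp only [sum_mul_mixAssignment, Fintype.sum_option, c, τ, Option.elim, hπ₀, hσ, price]
    simp only [mul_sub, sum_sub_distrib, ← sum_mul]
    ring

theorem fractional_augmentation_general (n : ℕ)
    (u : Fin n → Fin n → ℝ) (hu : ∀ i j, 0 ≤ u i j)
    (y : Fin n → ℝ) (hy : ∀ j, 0 ≤ y j) (hysum : ∑ j, y j ≤ 1) :
    OPTplusFrac n u y = OPT n u + ∑ j, y j * price n u j := by
  refine IsGreatest.csSup_eq ⟨?_, ?_⟩
  · obtain ⟨x, hx, hrow, hcol, hval⟩ := exists_frac_assignment_eq u hy hysum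
    exact ⟨x, hx, hrow, hcol, hval.symm⟩
  · rintro _ ⟨x, hx, hrow, hcol, rfl⟩
    obtain ⟨p, q, hp, hq, hpq, hOPT, hprice⟩ := exists_dual_le_price u hu
    calc ∑ i, ∑ j, u i j * x i j ≤ ∑ i, p i * 1 + ∑ j, q j * (1 + y j) :=
          sum_mul_le_of_dual hp hq hpq hx hrow hcol
      _ = OPT n u + ∑ j, y j * q j := by
          simp only [← hOPT, mul_one, mul_add, sum_add_distrib, mul_comm (q _) (y _)]
          ring
      _ ≤ OPT n u + ∑ j, y j * price n u j := by
          gcongr with j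
          exacts [hy j, hprice j]

/-- Fractional augmentation: making a `y j` fraction of an extra copy of each
item `j` available increases the optimal welfare by exactly `∑ j, y j * C j`. -/
theorem fractional_augmentation (n : ℕ) (hn : 1 ≤ n)
    (u : Fin n → Fin n → ℝ) (hu : ∀ i j, 0 ≤ u i j)
    (y : Fin n → ℝ) (hy : ∀ j, 0 ≤ y j) (hysum : ∑ j, y j ≤ 1) :
    OPTplusFrac n u y = OPT n u + ∑ j, y j * price n u j :=
  fractional_augmentation_general n u hu y hy hysum
end

section
/- Let n ≥ 1, u ∈ ℝ^{n×n} with 0 ≤ u_{ij} ≤ 1, λ ∈ ℝ^n with λ_i ≥ 0, and let f₀ : (0,1] → ℝ be non-decreasing with f₀(z) ≤ 0 for all z. Let M > 1 and η(λ) := (Σ_i λ_i)/M − n²·f₀(1/(n·M)). Suppose x is a positive doubly stochastic matrix attaining OPT₀(λ); define P_i := OPT₀(λ^{−i}) − (OPT₀(λ) − Σ_j λ_i·u_{ij}·x_{ij}) and let C_j be the VCG prices for the utilities u'_{ij} = λ_i·u_{ij}. Then for every player i and every y ∈ ℝ^n with y_j ≥ 0 and Σ_j y_j = 1: Σ_j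 λ_i·u_{ij}·y_j ≤ Σ_j λ_i·u_{ij}·x_{ij} + Σ_j y_j·C_j − P_i + η(λ). (The regularized allocation is, up to η(λ), a competitive equilibrium at the prices C_j.) -/
/-!
Write `w_{kj} = λ_k u_{kj}`. The terms `∑_j λ_i u_{ij} x_{ij}` cancel, so the claim is
`∑_j w_{ij} y_j ≤ ∑_j y_j C_j + OPT₀(λ) − OPT₀(λ^{−i}) + η(λ)`, which follows from three
comparisons.

* VCG: an optimal assignment for `λ^{−i}` with player `i` moved to item `j` is feasible for
  `OPT_{+j}`, so `OPT(λ^{−i}) + w_{ij} ≤ OPT(λ) + C_j`; average over `y`.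
* `OPT₀ ≤ OPT`: `f₀ ≤ 0`, and by Birkhoff's theorem a linear functional on doubly stochastic
  matrices is maximized at a permutation matrix.
* `OPT ≤ OPT₀ + η`: mixing an optimal permutation matrix with weight `1 − 1/M` and the uniform
  matrix with weight `1/M` loses at most `(∑ λ)/M` of welfare, and all its entries are at least
  `1/(nM)`, where the non-decreasing `f₀` is at least `f₀(1/(nM))`.
-/

open Finset

/-- `x` is a positive doubly stochastic matrix. -/
def PosDoublyStochastic (n : ℕ) (x : Fin n → Fin n → ℝ) : Prop :=
  (∀ i j, 0 < x i j) ∧ (∀ i, ∑ j, x i j = 1) ∧ (∀ j, ∑ i, x i j = 1)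

/-- The optimal regularized welfare. -/
noncomputable def OPT0 (n : ℕ) (u : Fin n → Fin n → ℝ) (f0 : ℝ → ℝ)
    (lam : Fin n → ℝ) : ℝ :=
  sSup {v | ∃ x : Fin n → Fin n → ℝ, PosDoublyStochastic n x ∧
    v = (∑ i, ∑ j, f0 (x i j)) + ∑ i, ∑ j, lam i * u i j * x i j}

section Assignment

variable {n : ℕ}

lemma OPT_set_finite (u : Fin n → Fin n → ℝ) :
    {v | ∃ π : Equiv.Perm (Fin n), v = ∑ i, u i (π i)}.Finite :=
  (Set.finite_range fun π : Equiv.Perm (Fin n) => ∑ i, u i (π i)).subset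
    fun _ ⟨π, hv⟩ => ⟨π, hv.symm⟩

lemma le_OPT (u : Fin n → Fin n → ℝ) (σ : Equiv.Perm (Fin n)) :
    ∑ i, u i (σ i) ≤ OPT n u :=
  le_csSup (OPT_set_finite u).bddAbove ⟨σ, rfl⟩

lemma exists_perm_OPT_eq (u : Fin n → Fin n → ℝ) :
    ∃ σ : Equiv.Perm (Fin n), OPT n u = ∑ i, u i (σ i) :=
  Set.Nonempty.csSup_mem (s := {v | ∃ π : Equiv.Perm (Fin n), v = ∑ i, u i (π i)})
    ⟨_, 1, rfl⟩ (OPT_set_finite u)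

lemma OPT_le_sum_of_le (u : Fin n → Fin n → ℝ) (b : Fin n → ℝ) (hub : ∀ i j, u i j ≤ b i) :
    OPT n u ≤ ∑ i, b i := by
  obtain ⟨σ, hσ⟩ := exists_perm_OPT_eq u
  exact hσ ▸ sum_le_sum fun i _ => hub i (σ i)

lemma sum_mul_permMatrix (c : Fin n → Fin n → ℝ) (σ : Equiv.Perm (Fin n)) :
    ∑ i, ∑ j, c i j * σ.permMatrix ℝ i j = ∑ i, c i (σ i) := by
  simp [Equiv.Perm.permMatrix, PEquiv.toMatrix_apply, eq_comm]

theorem sum_mul_le_OPT_of_mem_doublyStochastic (c : Fin n → Fin n → ℝ)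
    {x : Matrix (Fin n) (Fin n) ℝ} (hx : x ∈ doublyStochastic ℝ (Fin n)) :
    ∑ i, ∑ j, c i j * x i j ≤ OPT n c := by
  let L : Matrix (Fin n) (Fin n) ℝ →ₗ[ℝ] ℝ := ∑ i, ∑ j, c i j • Matrix.entryLinearMap ℝ ℝ i j
  have hL : ∀ y, L y = ∑ i, ∑ j, c i j * y i j := by simp [L]
  rw [← SetLike.mem_coe, doublyStochastic_eq_convexHull_permMatrix] at hx
  obtain ⟨_, ⟨σ, rfl⟩, hσ⟩ :=
    (L.convexOn convex_univ).exists_ge_of_mem_convexHull (Set.subset_univ _) hx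
  rw [hL, hL, sum_mul_permMatrix] at hσ
  exact hσ.trans (le_OPT c σ)

lemma OPTplus_set_bddAbove (u : Fin n → Fin n → ℝ) (j : Fin n) :
    BddAbove {v | ∃ π : Fin n → Fin n,
      (∀ ℓ : Fin n, ℓ ≠ j → (univ.filter (fun i => π i = ℓ)).card ≤ 1) ∧
      (univ.filter (fun i => π i = j)).card ≤ 2 ∧ v = ∑ i, u i (π i)} :=
  ((Set.finite_range fun π : Fin n → Fin n => ∑ i, u i (π i)).subset <| by
    rintro _ ⟨π, -, -, rfl⟩
    exact ⟨π, rfl⟩).bddAbove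

lemma filter_update_eq_subset (σ : Equiv.Perm (Fin n)) (i j ℓ : Fin n) :
    (univ.filter fun k => Function.update σ i j k = ℓ) ⊆
      if ℓ = j then {i, σ.symm ℓ} else {σ.symm ℓ} := by
  intro k hk
  rw [mem_filter] at hk
  by_cases hki : k = i <;> split_ifs <;> simp_all [Equiv.eq_symm_apply]

theorem OPT_update_zero_add_le_OPTplus (w : Fin n → Fin n → ℝ) (i j : Fin n) :
    OPT n (Function.update w i 0) + w i j ≤ OPTplus n w j := by
  obtain ⟨σ, hσ⟩ := exists_perm_OPT_eq (Function.update w i 0)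
  have hfiber := filter_update_eq_subset σ i j
  refine le_csSup_of_le (OPTplus_set_bddAbove w j)
    ⟨Function.update σ i j, fun ℓ hℓ => ?_, ?_, rfl⟩ (le_of_eq ?_)
  · simpa [hℓ] using card_le_card (hfiber ℓ)
  · exact (card_le_card (by simpa using hfiber j)).trans (card_le_two)
  · rw [hσ, Fintype.sum_eq_add_sum_compl i, Fintype.sum_eq_add_sum_compl i (fun k => w k _)]
    simp only [Function.update_self, Pi.zero_apply, zero_add, add_comm (w i j)]
    refine congrArg (· + w i j) (sum_congr rfl fun k hk => ?_)
    rw [mem_compl, mem_singleton] at hk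
    simp [hk]

theorem sum_mul_add_OPT_update_zero_le (w : Fin n → Fin n → ℝ) (i : Fin n) (y : Fin n → ℝ)
    (hy : ∀ j, 0 ≤ y j) (hy1 : ∑ j, y j = 1) :
    ∑ j, w i j * y j + OPT n (Function.update w i 0) ≤ ∑ j, y j * price n w j + OPT n w := by
  have h := sum_le_sum fun j (_ : j ∈ univ) =>
    mul_le_mul_of_nonneg_left (OPT_update_zero_add_le_OPTplus w i j) (hy j)
  have hprice : ∀ j, y j * OPTplus n w j = y j * price n w j + y j * OPT n w := fun j => by
    rw [price]; ring
  simp only [mul_add, sum_add_distrib, hprice, ← sum_mul, hy1, one_mul] at h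
  simpa only [mul_comm (y _), add_comm] using h

end Assignment

section Regularized

variable {n : ℕ}

lemma PosDoublyStochastic.mem_doublyStochastic {x : Fin n → Fin n → ℝ}
    (hx : PosDoublyStochastic n x) : Matrix.of x ∈ doublyStochastic ℝ (Fin n) :=
  mem_doublyStochastic_iff_sum.2 ⟨fun i j => (hx.1 i j).le, hx.2.1, hx.2.2⟩

lemma PosDoublyStochastic.le_one {x : Fin n → Fin n → ℝ} (hx : PosDoublyStochastic n x)
    (i j : Fin n) : x i j ≤ 1 :=
  le_one_of_mem_doublyStochastic hx.mem_doublyStochastic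

theorem regularizedWelfare_le_OPT (u : Fin n → Fin n → ℝ) (μ : Fin n → ℝ) {f0 : ℝ → ℝ}
    (hf0le : ∀ z : ℝ, 0 < z → z ≤ 1 → f0 z ≤ 0) {x : Fin n → Fin n → ℝ}
    (hx : PosDoublyStochastic n x) :
    (∑ i, ∑ j, f0 (x i j)) + ∑ i, ∑ j, μ i * u i j * x i j ≤ OPT n fun i j => μ i * u i j := by
  have hreg : ∑ i, ∑ j, f0 (x i j) ≤ 0 :=
    sum_nonpos fun i _ => sum_nonpos fun j _ => hf0le _ (hx.1 i j) (hx.le_one i j)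
  have hlin : ∑ i, ∑ j, μ i * u i j * x i j ≤ OPT n fun i j => μ i * u i j :=
    sum_mul_le_OPT_of_mem_doublyStochastic _ hx.mem_doublyStochastic
  linarith

noncomputable def perturbedPermMatrix (n : ℕ) (σ : Equiv.Perm (Fin n)) (s : ℝ) :
    Fin n → Fin n → ℝ :=
  fun i j => (1 - s) * σ.permMatrix ℝ i j + s / n

lemma div_le_perturbedPermMatrix (σ : Equiv.Perm (Fin n)) {s : ℝ} (hs1 : s ≤ 1) (i j : Fin n) :
    s / n ≤ perturbedPermMatrix n σ s i j :=
  le_add_of_nonneg_left <| mul_nonneg (sub_nonneg.2 hs1)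
    (nonneg_of_mem_doublyStochastic permMatrix_mem_doublyStochastic)

lemma posDoublyStochastic_perturbedPermMatrix (hn : 0 < n) (σ : Equiv.Perm (Fin n)) {s : ℝ}
    (hs0 : 0 < s) (hs1 : s ≤ 1) : PosDoublyStochastic n (perturbedPermMatrix n σ s) := by
  have hP : σ.permMatrix ℝ ∈ doublyStochastic ℝ (Fin n) := permMatrix_mem_doublyStochastic
  have hn' : (n : ℝ) ≠ 0 := by positivity
  refine ⟨fun i j => (by positivity : 0 < s / n).trans_le (div_le_perturbedPermMatrix σ hs1 i j),
    fun i => ?_, fun j => ?_⟩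
  · simp only [perturbedPermMatrix, sum_add_distrib, ← mul_sum,
      sum_row_of_mem_doublyStochastic hP, sum_const, card_univ, Fintype.card_fin, nsmul_eq_mul]
    field_simp
    ring
  · simp only [perturbedPermMatrix, sum_add_distrib, ← mul_sum,
      sum_col_of_mem_doublyStochastic hP, sum_const, card_univ, Fintype.card_fin, nsmul_eq_mul]
    field_simp
    ring

lemma sum_mul_perturbedPermMatrix (c : Fin n → Fin n → ℝ) (σ : Equiv.Perm (Fin n)) (s : ℝ) :
    ∑ i, ∑ j, c i j * perturbedPermMatrix n σ s i j =
      (1 - s) * ∑ i, c i (σ i) + s / n * ∑ i, ∑ j, c i j := by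
  simp only [perturbedPermMatrix, mul_add, sum_add_distrib, mul_sum, ← sum_mul_permMatrix c σ]
  congr 1 <;> refine sum_congr rfl fun i _ => sum_congr rfl fun j _ => by ring

lemma OPT0_set_bddAbove (u : Fin n → Fin n → ℝ) (μ : Fin n → ℝ) {f0 : ℝ → ℝ}
    (hf0le : ∀ z : ℝ, 0 < z → z ≤ 1 → f0 z ≤ 0) :
    BddAbove {v | ∃ x : Fin n → Fin n → ℝ, PosDoublyStochastic n x ∧
      v = (∑ i, ∑ j, f0 (x i j)) + ∑ i, ∑ j, μ i * u i j * x i j} := by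
  refine ⟨OPT n fun i j => μ i * u i j, ?_⟩
  rintro _ ⟨x, hx, rfl⟩
  exact regularizedWelfare_le_OPT u μ hf0le hx

lemma le_OPT0 (u : Fin n → Fin n → ℝ) (μ : Fin n → ℝ) {f0 : ℝ → ℝ}
    (hf0le : ∀ z : ℝ, 0 < z → z ≤ 1 → f0 z ≤ 0) {x : Fin n → Fin n → ℝ}
    (hx : PosDoublyStochastic n x) :
    (∑ i, ∑ j, f0 (x i j)) + ∑ i, ∑ j, μ i * u i j * x i j ≤ OPT0 n u f0 μ :=
  le_csSup (OPT0_set_bddAbove u μ hf0le) ⟨x, hx, rfl⟩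

theorem OPT0_le_OPT (hn : 0 < n) (u : Fin n → Fin n → ℝ) (μ : Fin n → ℝ) {f0 : ℝ → ℝ}
    (hf0le : ∀ z : ℝ, 0 < z → z ≤ 1 → f0 z ≤ 0) :
    OPT0 n u f0 μ ≤ OPT n fun i j => μ i * u i j := by
  refine csSup_le ⟨_, _, posDoublyStochastic_perturbedPermMatrix hn 1 one_pos le_rfl, rfl⟩ ?_
  rintro _ ⟨x, hx, rfl⟩
  exact regularizedWelfare_le_OPT u μ hf0le hx

theorem OPT_le_OPT0_add (hn : 0 < n) {u : Fin n → Fin n → ℝ} (hu : ∀ i j, 0 ≤ u i j ∧ u i j ≤ 1)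
    {μ : Fin n → ℝ} (hμ : ∀ i, 0 ≤ μ i) {f0 : ℝ → ℝ}
    (hf0le : ∀ z : ℝ, 0 < z → z ≤ 1 → f0 z ≤ 0)
    (hf0mono : ∀ z w : ℝ, 0 < z → z ≤ w → w ≤ 1 → f0 z ≤ f0 w) {s : ℝ} (hs0 : 0 < s)
    (hs1 : s ≤ 1) :
    (OPT n fun i j => μ i * u i j) ≤ OPT0 n u f0 μ + (s * ∑ i, μ i - (n : ℝ) ^ 2 * f0 (s / n)) := by
  obtain ⟨σ, hσ⟩ := exists_perm_OPT_eq fun i j => μ i * u i j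
  set z := perturbedPermMatrix n σ s
  have hz : PosDoublyStochastic n z := posDoublyStochastic_perturbedPermMatrix hn σ hs0 hs1
  have hreg : (n : ℝ) ^ 2 * f0 (s / n) ≤ ∑ i, ∑ j, f0 (z i j) := calc
    (n : ℝ) ^ 2 * f0 (s / n) = ∑ _i : Fin n, ∑ _j : Fin n, f0 (s / n) := by
      simp only [sum_const, card_univ, Fintype.card_fin, nsmul_eq_mul]; ring
    _ ≤ ∑ i, ∑ j, f0 (z i j) := sum_le_sum fun i _ => sum_le_sum fun j _ =>
      hf0mono _ _ (by positivity) (div_le_perturbedPermMatrix σ hs1 i j) (hz.le_one i j)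
  have hlin : (1 - s) * OPT n (fun i j => μ i * u i j) ≤ ∑ i, ∑ j, μ i * u i j * z i j := by
    rw [hσ, sum_mul_perturbedPermMatrix (fun i j => μ i * u i j)]
    exact le_add_of_nonneg_right <| mul_nonneg (by positivity) <|
      sum_nonneg fun i _ => sum_nonneg fun j _ => mul_nonneg (hμ i) (hu i j).1
  have hbound : (OPT n fun i j => μ i * u i j) ≤ ∑ i, μ i :=
    OPT_le_sum_of_le _ _ fun i j => mul_le_of_le_one_right (hμ i) (hu i j).2
  linarith [le_OPT0 u μ hf0le hz, mul_le_mul_of_nonneg_left hbound hs0.le]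

end Regularized

theorem regularized_allocation_approx_competitive_equilibrium_general
    (n : ℕ) (hn : 1 ≤ n)
    (u : Fin n → Fin n → ℝ) (hu : ∀ i j, 0 ≤ u i j ∧ u i j ≤ 1)
    (lam : Fin n → ℝ) (hlam : ∀ i, 0 ≤ lam i)
    (f0 : ℝ → ℝ)
    (hf0le : ∀ z : ℝ, 0 < z → z ≤ 1 → f0 z ≤ 0)
    (hf0mono : ∀ z w : ℝ, 0 < z → z ≤ w → w ≤ 1 → f0 z ≤ f0 w)
    (M : ℝ) (hM : 1 < M)
    (x : Fin n → Fin n → ℝ) :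
    ∀ i : Fin n, ∀ y : Fin n → ℝ, (∀ j, 0 ≤ y j) → (∑ j, y j) = 1 →
      ∑ j, lam i * u i j * y j ≤
        (∑ j, lam i * u i j * x i j) +
        (∑ j, y j * price n (fun k j => lam k * u k j) j) -
        (OPT0 n u f0 (Function.update lam i 0) -
          (OPT0 n u f0 lam - ∑ j, lam i * u i j * x i j)) +
        ((∑ i, lam i) / M - (n : ℝ)^2 * f0 (1 / ((n : ℝ) * M))) := by
  intro i y hy hy1
  have hrow : (fun k l => Function.update lam i 0 k * u k l) =
      Function.update (fun k l => lam k * u k l) i 0 := by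
    ext k l
    by_cases hk : k = i <;> simp [hk]
  have hvcg := sum_mul_add_OPT_update_zero_le (fun k l => lam k * u k l) i y hy hy1
  have hlower := OPT0_le_OPT hn u (Function.update lam i 0) hf0le
  have hM0 : 0 < M := zero_lt_one.trans hM
  have hupper := OPT_le_OPT0_add hn hu hlam hf0le hf0mono (one_div_pos.2 hM0)
    (div_le_one_of_le₀ hM.le hM0.le)
  rw [hrow] at hlower
  rw [one_div_mul_eq_div, div_div, mul_comm M] at hupper
  linarith

/-- The regularized allocation is, up to `η(λ)`, a competitive equilibrium at
the VCG prices `C_j`: for every alternative bundle `y`,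
`∑_j λ_i·u_{ij}·y_j ≤ ∑_j λ_i·u_{ij}·x_{ij} + ∑_j y_j·C_j − P_i + η(λ)`. -/
theorem regularized_allocation_approx_competitive_equilibrium
    (n : ℕ) (hn : 1 ≤ n)
    (u : Fin n → Fin n → ℝ) (hu : ∀ i j, 0 ≤ u i j ∧ u i j ≤ 1)
    (lam : Fin n → ℝ) (hlam : ∀ i, 0 ≤ lam i)
    (f0 : ℝ → ℝ)
    (hf0le : ∀ z : ℝ, 0 < z → z ≤ 1 → f0 z ≤ 0)
    (hf0mono : ∀ z w : ℝ, 0 < z → z ≤ w → w ≤ 1 → f0 z ≤ f0 w)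
    (M : ℝ) (hM : 1 < M)
    (x : Fin n → Fin n → ℝ) (hx : PosDoublyStochastic n x)
    (hatt : (∑ i, ∑ j, f0 (x i j)) + (∑ i, ∑ j, lam i * u i j * x i j)
      = OPT0 n u f0 lam) :
    ∀ i : Fin n, ∀ y : Fin n → ℝ, (∀ j, 0 ≤ y j) → (∑ j, y j) = 1 →
      ∑ j, lam i * u i j * y j ≤
        (∑ j, lam i * u i j * x i j) +
        (∑ j, y j * price n (fun k j => lam k * u k j) j) -
        (OPT0 n u f0 (Function.update lam i 0) -
          (OPT0 n u f0 lam - ∑ j, lam i * u i j * x i j)) +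
        ((∑ i, lam i) / M - (n : ℝ)^2 * f0 (1 / ((n : ℝ) * M))) :=
  regularized_allocation_approx_competitive_equilibrium_general n hn u hu lam hlam f0 hf0le hf0mono
    M hM x
end
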